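/- Let n ≥ 2, let k be a natural number with 1 ≤ k < n, let μ ∈ ℝ, θ > 0 and σ > 0. Then the minimum of E_iid over A_k is attained, and min_{T ∈ A_k} E_iid(T) = (σ²/2)·( k·θ²/(θ² + σ²) + (n − k) ). -/

import Mathlib

open Matrix

lemma exists_ortho_family (n m : ℕ) (W : Submodule ℝ (EuclideanSpace ℝ (Fin n)))
    (hm : m ≤ Module.finrank ℝ W) :
    ∃ v : Fin m → (Fin n → ℝ), (∀ i j, ∑ l, v i l * v j l = if i = j then 1 else 0) ∧
      ∀ i, (WithLp.toLp 2 (v i) : EuclideanSpace ℝ (Fin n)) ∈ W := by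
  have b := stdOrthonormalBasis ℝ W
  refine ⟨fun i => ((b (Fin.castLE hm i) : W) : EuclideanSpace ℝ (Fin n)), ?_, ?_⟩
  · intro i j
    have hob := b.orthonormal
    rw [orthonormal_iff_ite] at hob
    have h := hob (Fin.castLE hm i) (Fin.castLE hm j)
    rw [Submodule.coe_inner _ _ _, PiLp.inner_apply] at h
    simp only [RCLike.inner_apply, starRingEnd_apply, star_trivial] at h
    beta_reduce
    simp only [mul_comm (WithLp.ofLp ((b (Fin.castLE hm i) : EuclideanSpace ℝ (Fin n))) _)]
    rw [h]
    simp [Fin.castLE, Fin.ext_iff]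
  · intro i; exact (b _).2

lemma sum_sq_eq_trace {n : ℕ} (M : Matrix (Fin n) (Fin n) ℝ) :
    ∑ i, ∑ j, M i j ^ 2 = (Mᵀ * M).trace := by
  rw [Matrix.trace, Finset.sum_comm]
  simp [Matrix.mul_apply, Matrix.diag, pow_two]

lemma trace_transpose_mul_self_nonneg {n : ℕ} (M : Matrix (Fin n) (Fin n) ℝ) :
    0 ≤ (Mᵀ * M).trace := by
  rw [← sum_sq_eq_trace]
  positivity

lemma mul_vecMulVec {n : ℕ} (M : Matrix (Fin n) (Fin n) ℝ) (a b : Fin n → ℝ) :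
    M * vecMulVec a b = vecMulVec (M.mulVec a) b := by
  ext i j
  simp [Matrix.mul_apply, vecMulVec_apply, Matrix.mulVec, dotProduct,
    Finset.sum_mul, mul_assoc]

lemma vecMulVec_mul_vecMulVec {n : ℕ} (a b c d : Fin n → ℝ) :
    vecMulVec a b * vecMulVec c d = (∑ l, b l * c l) • vecMulVec a d := by
  ext i j
  simp [Matrix.mul_apply, vecMulVec_apply, Finset.sum_mul, Finset.mul_sum]
  congr 1; ext l; ring

lemma trace_vecMulVec {n : ℕ} (a b : Fin n → ℝ) :
    (vecMulVec a b).trace = ∑ l, a l * b l := by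
  simp [Matrix.trace, vecMulVec_apply, Matrix.diag]

lemma vecMulVec_mulVec {n : ℕ} (a b x : Fin n → ℝ) :
    (vecMulVec a b).mulVec x = (∑ l, b l * x l) • a := by
  ext i
  simp [vecMulVec_apply, Matrix.mulVec, dotProduct, Finset.sum_mul, Finset.mul_sum]
  congr 1; ext l; ring

lemma sum_mulVec' {n : ℕ} {ι : Type*} (s : Finset ι) (M : ι → Matrix (Fin n) (Fin n) ℝ)
    (x : Fin n → ℝ) : (∑ i ∈ s, M i).mulVec x = ∑ i ∈ s, (M i).mulVec x := by
  ext j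
  simp only [Matrix.mulVec, dotProduct, Finset.sum_apply, Matrix.sum_apply,
    Finset.sum_mul]
  exact Finset.sum_comm



/-- The risk for the random i.i.d. vectors model:
`E_iid(T) = (μ²/2)‖(T − I)𝟙‖₂² + (θ²/2)‖T − I‖_F² + (σ²/2)‖T‖_F²`. -/
noncomputable def Eiid (n : ℕ) (μ θ σ : ℝ) (T : Matrix (Fin n) (Fin n) ℝ) : ℝ :=
  μ ^ 2 / 2 * (∑ i, ((T - 1).mulVec (fun _ : Fin n => 1) i) ^ 2)
    + θ ^ 2 / 2 * (∑ i, ∑ j, ((T - 1) i j) ^ 2)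
    + σ ^ 2 / 2 * ∑ i, ∑ j, (T i j) ^ 2

/-- The set of bilevel estimators `A_k = { (I + RᵀR)⁻¹ : R ∈ ℝ^{k×n} }`. -/
def bilevelSet (k n : ℕ) : Set (Matrix (Fin n) (Fin n) ℝ) :=
  {T | ∃ R : Matrix (Fin k) (Fin n) ℝ, T = (1 + Rᵀ * R)⁻¹}

lemma mem_part (n k : ℕ) (hn : 2 ≤ n) (hk : k < n) (μ θ σ : ℝ) (hθ : 0 < θ) (hσ : 0 < σ) :
    (σ ^ 2 / 2 * ((k : ℝ) * (θ ^ 2 / (θ ^ 2 + σ ^ 2)) + ((n : ℝ) - (k : ℝ))))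
      ∈ Eiid n μ θ σ '' bilevelSet k n := by
  have hD : (0:ℝ) < θ ^ 2 + σ ^ 2 := by positivity
  set D : ℝ := θ ^ 2 + σ ^ 2 with hDdef
  set s : ℝ := σ ^ 2 / D with hsdef
  set a : ℝ := σ ^ 2 / θ ^ 2 with hadef
  have ha : 0 ≤ a := by positivity
  set o : EuclideanSpace ℝ (Fin n) := WithLp.toLp 2 (fun _ => (1:ℝ)) with hodef
  have hones : o ≠ 0 := by
    intro h
    have := congrArg (fun x : EuclideanSpace ℝ (Fin n) => x ⟨0, by omega⟩) h
    simpa [hodef] using this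
  have hkW : k ≤ Module.finrank ℝ ((ℝ ∙ o)ᗮ : Submodule ℝ (EuclideanSpace ℝ (Fin n))) := by
    have h1 := Submodule.finrank_add_finrank_orthogonal (K := (ℝ ∙ o))
    rw [finrank_span_singleton hones, finrank_euclideanSpace, Fintype.card_fin] at h1
    omega
  obtain ⟨v, hv, hvW⟩ := exists_ortho_family n k _ hkW
  have hsum : ∀ i, ∑ l, v i l = 0 := by
    intro i
    have h0 := (Submodule.mem_orthogonal (𝕜 := ℝ) (E := EuclideanSpace ℝ (Fin n))
      (ℝ ∙ o) (WithLp.toLp 2 (v i))).mp (hvW i) o (Submodule.mem_span_singleton_self o)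
    rw [PiLp.inner_apply] at h0
    simpa [RCLike.inner_apply, hodef] using h0
  set P : Matrix (Fin n) (Fin n) ℝ := ∑ i : Fin k, vecMulVec (v i) (v i) with hPdef
  have hPP : P * P = P := by
    rw [hPdef, Finset.sum_mul_sum]
    simp only [_root_.vecMulVec_mul_vecMulVec, hv]
    simp [ite_smul]
  have hPtr : P.trace = (k : ℝ) := by
    rw [hPdef, Matrix.trace_sum]
    simp only [_root_.trace_vecMulVec, hv]
    simp
  have hPsym : Pᵀ = P := by
    rw [hPdef, Matrix.transpose_sum]
    congr 1; ext i : 1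
    ext x y
    simp [vecMulVec_apply, mul_comm]
  have hPones : P.mulVec (fun _ => (1:ℝ)) = 0 := by
    rw [hPdef, sum_mulVec']
    have h2 : ∀ i : Fin k, (vecMulVec (v i) (v i)).mulVec (fun _ => (1:ℝ)) = 0 := by
      intro i
      rw [vecMulVec_mulVec]
      simp [hsum i]
    simp [h2]
  -- the estimator
  set R : Matrix (Fin k) (Fin n) ℝ := Matrix.of (fun i j => Real.sqrt a * v i j) with hRdef
  have hRR : Rᵀ * R = a • P := by
    ext x y
    rw [hPdef]
    simp only [Matrix.mul_apply, Matrix.smul_apply, Matrix.sum_apply, Matrix.transpose_apply,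
      hRdef, Matrix.of_apply, vecMulVec_apply, Finset.mul_sum, smul_eq_mul]
    congr 1; ext i
    rw [show Real.sqrt a * v i x * (Real.sqrt a * v i y)
        = (Real.sqrt a * Real.sqrt a) * (v i x * v i y) by ring, Real.mul_self_sqrt ha]
  set T : Matrix (Fin n) (Fin n) ℝ := 1 - s • P with hTdef
  have hcoef : a = s + a * s := by
    rw [hadef, hsdef, hDdef]
    field_simp
  have hzero : a - s - s * a = 0 := by
    rw [hadef, hsdef, hDdef]
    field_simp
    ring
  have hTA : T * (1 + Rᵀ * R) = 1 := by
    rw [hRR, hTdef]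
    have e1 : (1 - s • P) * (1 + a • P) = 1 + (a - s - s * a) • P := by
      simp only [mul_add, sub_mul, add_mul, mul_sub, one_mul, mul_one, Matrix.smul_mul,
        Matrix.mul_smul, smul_smul, hPP]
      module
    rw [e1, hzero]
    simp
  have hmem : T ∈ bilevelSet k n := ⟨R, (Matrix.inv_eq_left_inv hTA).symm⟩
  refine ⟨T, hmem, ?_⟩
  -- compute Eiid T
  have hT1 : T - 1 = -(s • P) := by rw [hTdef]; abel
  have term1 : ∑ i, ((T - 1).mulVec (fun _ : Fin n => 1) i) ^ 2 = 0 := by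
    rw [hT1, Matrix.neg_mulVec, Matrix.smul_mulVec, hPones]
    simp
  have term2 : ∑ i, ∑ j, ((T - 1) i j) ^ 2 = s ^ 2 * (k:ℝ) := by
    rw [sum_sq_eq_trace, hT1]
    have : (-(s • P))ᵀ * (-(s • P)) = (s * s) • (P * P) := by
      rw [Matrix.transpose_neg, Matrix.transpose_smul, hPsym, neg_mul_neg,
        Matrix.smul_mul, Matrix.mul_smul, smul_smul]
    rw [this, hPP, Matrix.trace_smul, hPtr]
    simp [pow_two]
  have term3 : ∑ i, ∑ j, (T i j) ^ 2 = (n:ℝ) - (2 * s - s ^ 2) * (k:ℝ) := by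
    rw [sum_sq_eq_trace]
    have hTsym : Tᵀ = T := by
      rw [hTdef, Matrix.transpose_sub, Matrix.transpose_one, Matrix.transpose_smul, hPsym]
    have e3 : T * T = 1 - (2 * s - s ^ 2) • P := by
      rw [hTdef]
      simp only [mul_sub, sub_mul, one_mul, mul_one, Matrix.smul_mul, Matrix.mul_smul,
        smul_smul, hPP]
      module
    rw [hTsym, e3, Matrix.trace_sub, Matrix.trace_smul, Matrix.trace_one, hPtr]
    simp [Finset.card_univ]
  rw [Eiid, term1, term2, term3]
  rw [hsdef, hDdef]
  field_simp
  ring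

set_option maxHeartbeats 1000000 in
lemma lb_part (n k : ℕ) (hk : k ≤ n) (μ θ σ : ℝ) (hθ : 0 < θ) (hσ : 0 < σ)
    (R : Matrix (Fin k) (Fin n) ℝ) :
    σ ^ 2 / 2 * ((k : ℝ) * (θ ^ 2 / (θ ^ 2 + σ ^ 2)) + ((n : ℝ) - (k : ℝ)))
      ≤ Eiid n μ θ σ ((1 + Rᵀ * R)⁻¹) := by
  have hD : (0:ℝ) < θ ^ 2 + σ ^ 2 := by positivity
  set D : ℝ := θ ^ 2 + σ ^ 2 with hDdef
  set c : ℝ := θ ^ 2 / D with hcdef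
  set s : ℝ := σ ^ 2 / D with hsdef
  set A : Matrix (Fin n) (Fin n) ℝ := 1 + Rᵀ * R with hAdef
  have hAsym : Aᵀ = A := by
    rw [hAdef, Matrix.transpose_add, Matrix.transpose_one, Matrix.transpose_mul,
      Matrix.transpose_transpose]
  have hconj : Rᴴ = Rᵀ := by ext i j; simp [Matrix.conjTranspose_apply]
  have hPSD : (Rᵀ * R).PosSemidef := hconj ▸ Matrix.posSemidef_conjTranspose_mul_self R
  have hApd : A.PosDef := Matrix.PosDef.one.add_posSemidef hPSD
  have hdet : IsUnit A.det := isUnit_iff_ne_zero.mpr hApd.det_pos.ne'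
  set T : Matrix (Fin n) (Fin n) ℝ := A⁻¹ with hTdef
  have hTA : T * A = 1 := Matrix.nonsing_inv_mul A hdet
  have hAT : A * T = 1 := Matrix.mul_nonsing_inv A hdet
  have hTsym : Tᵀ = T := by rw [hTdef, Matrix.transpose_nonsing_inv, hAsym]
  -- kernel of R
  set e : EuclideanSpace ℝ (Fin n) ≃ₗ[ℝ] (Fin n → ℝ) := WithLp.linearEquiv 2 ℝ (Fin n → ℝ)
    with hedef
  set W : Submodule ℝ (EuclideanSpace ℝ (Fin n)) :=
    Submodule.comap (e : EuclideanSpace ℝ (Fin n) →ₗ[ℝ] (Fin n → ℝ))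
      (LinearMap.ker R.mulVecLin) with hWdef
  set m : ℕ := Module.finrank ℝ W with hmdef
  have hmk : n ≤ m + k := by
    have h1 := LinearMap.finrank_range_add_finrank_ker (R.mulVecLin)
    have h2 : Module.finrank ℝ (LinearMap.range R.mulVecLin) ≤ k := by
      have := Submodule.finrank_le (LinearMap.range R.mulVecLin)
      rwa [Module.finrank_fin_fun ℝ] at this
    have h3 : Module.finrank ℝ (Fin n → ℝ) = n := Module.finrank_fin_fun ℝ
    have h4 : m = Module.finrank ℝ (LinearMap.ker R.mulVecLin) := by
      rw [hmdef, hWdef, Submodule.comap_equiv_eq_map_symm]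
      exact LinearEquiv.finrank_map_eq e.symm _
    omega
  obtain ⟨v, hv, hvW⟩ := exists_ortho_family n m W le_rfl
  have hker : ∀ i, R.mulVec (v i) = 0 := by
    intro i
    have := Submodule.mem_comap.mp (hvW i)
    simpa [hedef] using this
  have hTv : ∀ i, T.mulVec (v i) = v i := by
    intro i
    have hAv : A.mulVec (v i) = v i := by
      rw [hAdef, Matrix.add_mulVec, Matrix.one_mulVec, ← Matrix.mulVec_mulVec, hker i]
      simp [Matrix.mulVec_zero]
    conv_lhs => rw [← hAv]
    rw [Matrix.mulVec_mulVec, hTA, Matrix.one_mulVec]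
  set M : Matrix (Fin n) (Fin n) ℝ := T - c • 1 with hMdef
  have hMsym : Mᵀ = M := by
    rw [hMdef, Matrix.transpose_sub, Matrix.transpose_smul, Matrix.transpose_one, hTsym]
  have hMv : ∀ i, M.mulVec (v i) = s • v i := by
    intro i
    rw [hMdef, Matrix.sub_mulVec, hTv i, Matrix.smul_mulVec, Matrix.one_mulVec]
    ext l
    have : (1:ℝ) - c = s := by rw [hcdef, hsdef, hDdef]; field_simp; ring
    simp [← this]
    ring
  set P : Matrix (Fin n) (Fin n) ℝ := ∑ i : Fin m, vecMulVec (v i) (v i) with hPdef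
  have hPP : P * P = P := by
    rw [hPdef, Finset.sum_mul_sum]
    simp only [_root_.vecMulVec_mul_vecMulVec, hv]
    simp [ite_smul]
  have hPtr : P.trace = (m : ℝ) := by
    rw [hPdef, Matrix.trace_sum]
    simp only [_root_.trace_vecMulVec, hv]
    simp
  have hMP : M * P = s • P := by
    rw [hPdef, Finset.mul_sum, Finset.smul_sum]
    congr 1; ext i : 1
    rw [_root_.mul_vecMulVec, hMv i]
    ext x y
    simp [vecMulVec_apply]
    ring
  set Q : Matrix (Fin n) (Fin n) ℝ := 1 - P with hQdef
  have hQsym : Qᵀ = Q := by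
    have hPsym : Pᵀ = P := by
      rw [hPdef, Matrix.transpose_sum]
      congr 1; ext i : 1
      ext x y
      simp [vecMulVec_apply, mul_comm]
    rw [hQdef, Matrix.transpose_sub, Matrix.transpose_one, hPsym]
  have hQQ : Q * Q = Q := by
    rw [hQdef]
    simp only [mul_sub, sub_mul, mul_one, one_mul, hPP]
    abel
  -- trace bound
  have tr1 : (M * M * P).trace = s ^ 2 * (m:ℝ) := by
    rw [mul_assoc, hMP, Matrix.mul_smul, hMP, smul_smul, Matrix.trace_smul, hPtr]
    simp [pow_two]
  have tr2 : 0 ≤ (M * M * Q).trace := by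
    have h1 : M * M * Q = (M * M * Q) * Q := by rw [mul_assoc (M*M) Q Q, hQQ]
    have h2 : Q * (M * M * Q) = (M * Q)ᵀ * (M * Q) := by
      rw [Matrix.transpose_mul, hMsym, hQsym]
      simp only [mul_assoc]
    rw [h1, Matrix.trace_mul_comm, h2]
    exact trace_transpose_mul_self_nonneg _
  have trMM : s ^ 2 * ((n:ℝ) - (k:ℝ)) ≤ (M * M).trace := by
    have hsplit0 : ∀ X : Matrix (Fin n) (Fin n) ℝ, X = X * P + X * Q := by
      intro X
      rw [hQdef, mul_sub, mul_one]
      abel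
    have hsplit : M * M = M * M * P + M * M * Q := hsplit0 (M * M)
    have hnk : (n:ℝ) - (k:ℝ) ≤ (m:ℝ) := by
      have : (n:ℝ) ≤ (m:ℝ) + (k:ℝ) := by exact_mod_cast hmk
      linarith
    have : s ^ 2 * ((n:ℝ) - (k:ℝ)) ≤ s ^ 2 * (m:ℝ) := by nlinarith [sq_nonneg s]
    rw [hsplit, Matrix.trace_add, tr1]
    linarith
  have sumM : ∑ i, ∑ j, (M i j) ^ 2 = (M * M).trace := by
    rw [sum_sq_eq_trace, hMsym]
  -- entrywise identity
  have ent : ∀ i j : Fin n, θ ^ 2 * ((T - 1) i j) ^ 2 + σ ^ 2 * (T i j) ^ 2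
      = D * (M i j) ^ 2 + (θ ^ 2 * σ ^ 2 / D) * (if i = j then (1:ℝ) else 0) := by
    intro i j
    have hM : M i j = T i j - c * (if i = j then (1:ℝ) else 0) := by
      rw [hMdef]
      simp [Matrix.sub_apply, Matrix.smul_apply, Matrix.one_apply]
    have h1 : (T - 1) i j = T i j - (if i = j then (1:ℝ) else 0) := by
      rw [Matrix.sub_apply]
      simp [Matrix.one_apply]
    rw [hM, h1]
    by_cases hij : i = j
    · simp only [hij, if_true]
      rw [hcdef, hDdef]
      field_simp
      ring
    · simp only [hij, if_false]
      rw [hDdef]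
      ring
  have sum_ent : θ ^ 2 * (∑ i, ∑ j, ((T - 1) i j) ^ 2)
      + σ ^ 2 * (∑ i, ∑ j, (T i j) ^ 2)
      = D * ∑ i, ∑ j, (M i j) ^ 2 + (θ ^ 2 * σ ^ 2 / D) * (n : ℝ) := by
    have e1 : ∑ i : Fin n, ∑ j, (θ ^ 2 * ((T - 1) i j) ^ 2 + σ ^ 2 * (T i j) ^ 2)
        = ∑ i : Fin n, ∑ j, (D * (M i j) ^ 2
          + (θ ^ 2 * σ ^ 2 / D) * (if i = j then (1:ℝ) else 0)) :=
      Finset.sum_congr rfl fun i _ => Finset.sum_congr rfl fun j _ => ent i j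
    have l1 : θ ^ 2 * (∑ i, ∑ j, ((T - 1) i j) ^ 2) + σ ^ 2 * (∑ i, ∑ j, (T i j) ^ 2)
        = ∑ i : Fin n, ∑ j, (θ ^ 2 * ((T - 1) i j) ^ 2 + σ ^ 2 * (T i j) ^ 2) := by
      rw [Finset.mul_sum, Finset.mul_sum, ← Finset.sum_add_distrib]
      congr 1; ext i
      rw [Finset.mul_sum, Finset.mul_sum, ← Finset.sum_add_distrib]
    have l2a : ∑ i : Fin n, ∑ j, D * (M i j) ^ 2 = D * ∑ i, ∑ j, (M i j) ^ 2 := by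
      rw [Finset.mul_sum]; congr 1; ext i; rw [Finset.mul_sum]
    have l2b : ∑ i : Fin n, ∑ j, (θ ^ 2 * σ ^ 2 / D) * (if i = j then (1:ℝ) else 0)
        = (θ ^ 2 * σ ^ 2 / D) * (n : ℝ) := by
      have hrow : ∀ i : Fin n, ∑ j, (θ ^ 2 * σ ^ 2 / D) * (if i = j then (1:ℝ) else 0)
          = θ ^ 2 * σ ^ 2 / D := by
        intro i; simp
      simp only [hrow]
      simp [Finset.card_univ, mul_comm]
    rw [l1, e1]
    simp only [Finset.sum_add_distrib]
    rw [l2a, l2b]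
  -- assemble
  have hgoal : Eiid n μ θ σ ((1 + Rᵀ * R)⁻¹) = Eiid n μ θ σ T := by rw [hTdef, hAdef]
  rw [hgoal, Eiid]
  have hμ : 0 ≤ μ ^ 2 / 2 * (∑ i, ((T - 1).mulVec (fun _ : Fin n => 1) i) ^ 2) := by
    positivity
  have key : D * (s ^ 2 * ((n:ℝ) - (k:ℝ))) ≤ D * ∑ i, ∑ j, (M i j) ^ 2 := by
    rw [sumM]
    exact mul_le_mul_of_nonneg_left trMM (le_of_lt hD)
  have target_eq : σ ^ 2 / 2 * ((k : ℝ) * c + ((n : ℝ) - (k : ℝ)))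
      = 1/2 * (D * (s ^ 2 * ((n:ℝ) - (k:ℝ))) + (θ ^ 2 * σ ^ 2 / D) * (n : ℝ)) := by
    rw [hcdef, hsdef, hDdef]
    field_simp
    ring
  have h5 : D * (s ^ 2 * ((n:ℝ) - (k:ℝ))) + (θ ^ 2 * σ ^ 2 / D) * (n : ℝ)
      ≤ θ ^ 2 * (∑ i, ∑ j, ((T - 1) i j) ^ 2) + σ ^ 2 * (∑ i, ∑ j, (T i j) ^ 2) := by
    rw [sum_ent]
    exact add_le_add_left key _
  rw [target_eq]
  linarith [hμ, h5]

/-- Best bilevel risk, random i.i.d. vectors, `k < n`: the minimum of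
`E_iid` over `A_k` is attained and equals `(σ²/2)(k·θ²/(θ²+σ²) + (n − k))`. -/
theorem best_bilevel_iid_k_lt_n (n k : ℕ) (hn : 2 ≤ n) (hk1 : 1 ≤ k) (hk : k < n)
    (μ : ℝ) (θ σ : ℝ) (hθ : 0 < θ) (hσ : 0 < σ) :
    IsLeast (Eiid n μ θ σ '' bilevelSet k n)
      (σ ^ 2 / 2 *
        ((k : ℝ) * (θ ^ 2 / (θ ^ 2 + σ ^ 2)) + ((n : ℝ) - (k : ℝ)))) := by
  constructor
  · exact mem_part n k hn hk μ θ σ hθ hσ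
  · rintro x ⟨T, ⟨R, rfl⟩, rfl⟩
    exact lb_part n k hk.le μ θ σ hθ hσ R
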